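/- Fix D > 0, 0 ≤ h < H, set η(h) = 1 − h/H and c_h = π·η(h)·D. Define g_h^x(ξ₁, ξ₂) = 8πi·η(h)·ξ₁·D²·sin²(π·η(h)·D·ξ₁)·sinc(η(h)·D·ξ₁)·sinc(η(h)·D·ξ₂), where sinc(t) = sin(πt)/(πt). Then for every r > 1, the line integral of |g_h^x(ξ)|² over the circle ∂B(0,r) ⊂ ℝ² is bounded above by 256·(D² + 1/(π²·η(h)²·sin 1)), a constant independent of r. -/

import Mathlib

/-! Since `π t · sincπ t = sin (π t)`, the kernel simplifies to
`g = 8 i D sin³ (π η D ξ₁) sincπ (η D ξ₂)`, so `|g|² ≤ 64 D²` and `(π η ξ₂)² |g|² ≤ 64`.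
On the circle `ξ₂ = r sin θ`: the first bound is used on the arcs of angular length `2/r` around
the zeros of `sin θ`, the second one elsewhere, where `∫ sin⁻² = -cot` and `cot (1/r) ≤ r / sin 1`
by concavity of `sin`. -/

open Real Complex

/-- `sinc t = sin (π t) / (π t)`, extended by `sinc 0 = 1`. -/
noncomputable def sincπ (t : ℝ) : ℝ := if t = 0 then 1 else Real.sin (π * t) / (π * t)

/-- The kernel function `g_h^x`. -/
noncomputable def gkernel (D η : ℝ) (ξ₁ ξ₂ : ℝ) : ℂ :=
  8 * π * Complex.I * η * ξ₁ * D ^ 2 * (Real.sin (π * η * D * ξ₁)) ^ 2 *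
    sincπ (η * D * ξ₁) * sincπ (η * D * ξ₂)

open intervalIntegral

lemma sincπ_eq_sinc (t : ℝ) : sincπ t = sinc (π * t) := by
  simp [sincπ, sinc, pi_ne_zero]

@[fun_prop]
lemma continuous_sincπ : Continuous sincπ := by
  rw [funext sincπ_eq_sinc]
  fun_prop

lemma abs_sincπ_le_one (t : ℝ) : |sincπ t| ≤ 1 := by
  rw [sincπ_eq_sinc]
  exact abs_sinc_le_one _

lemma mul_sincπ (t : ℝ) : π * t * sincπ t = Real.sin (π * t) := by
  rcases eq_or_ne t 0 with rfl | ht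
  · simp
  · rw [sincπ, if_neg ht]
    field_simp [pi_ne_zero, ht]

lemma sq_mul_sq_sincπ_le_one (t : ℝ) : (π * t) ^ 2 * sincπ t ^ 2 ≤ 1 := by
  rw [← mul_pow, mul_sincπ]
  exact sin_sq_le_one _

lemma gkernel_eq (D η ξ₁ ξ₂ : ℝ) :
    gkernel D η ξ₁ ξ₂ =
      8 * Complex.I * D * (Real.sin (π * η * D * ξ₁) ^ 3 * sincπ (η * D * ξ₂) : ℝ) := by
  have h := mul_sincπ (η * D * ξ₁)
  rw [← mul_assoc, ← mul_assoc] at h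
  rw [gkernel, ← h]
  push_cast
  ring

lemma norm_gkernel_le (D η ξ₁ ξ₂ : ℝ) :
    ‖gkernel D η ξ₁ ξ₂‖ ≤ 8 * |D| * |sincπ (η * D * ξ₂)| := by
  rw [gkernel_eq, norm_mul, norm_mul, norm_mul, Complex.norm_I, Complex.norm_real,
    Complex.norm_real, Real.norm_eq_abs, Real.norm_eq_abs, abs_mul, abs_pow]
  have hsin : |Real.sin (π * η * D * ξ₁)| ^ 3 ≤ 1 := pow_le_one₀ (abs_nonneg _) (abs_sin_le_one _)
  calc ‖(8 : ℂ)‖ * 1 * |D| * (|Real.sin (π * η * D * ξ₁)| ^ 3 * |sincπ (η * D * ξ₂)|)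
      ≤ 8 * 1 * |D| * (1 * |sincπ (η * D * ξ₂)|) := by gcongr; norm_num
    _ = 8 * |D| * |sincπ (η * D * ξ₂)| := by ring

lemma sq_norm_gkernel_le (D η ξ₁ ξ₂ : ℝ) :
    ‖gkernel D η ξ₁ ξ₂‖ ^ 2 ≤ 64 * D ^ 2 * sincπ (η * D * ξ₂) ^ 2 := by
  calc ‖gkernel D η ξ₁ ξ₂‖ ^ 2 ≤ (8 * |D| * |sincπ (η * D * ξ₂)|) ^ 2 := by
        gcongr; exact norm_gkernel_le D η ξ₁ ξ₂
    _ = 64 * D ^ 2 * sincπ (η * D * ξ₂) ^ 2 := by simp only [mul_pow, sq_abs]; norm_num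

lemma sq_norm_gkernel_le_const (D η ξ₁ ξ₂ : ℝ) : ‖gkernel D η ξ₁ ξ₂‖ ^ 2 ≤ 64 * D ^ 2 := by
  refine (sq_norm_gkernel_le D η ξ₁ ξ₂).trans (mul_le_of_le_one_right (by positivity) ?_)
  rw [sq_le_one_iff_abs_le_one]
  exact abs_sincπ_le_one _

lemma sq_mul_sq_norm_gkernel_le (D η ξ₁ ξ₂ : ℝ) :
    (π * η * ξ₂) ^ 2 * ‖gkernel D η ξ₁ ξ₂‖ ^ 2 ≤ 64 := by
  calc (π * η * ξ₂) ^ 2 * ‖gkernel D η ξ₁ ξ₂‖ ^ 2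
      ≤ (π * η * ξ₂) ^ 2 * (64 * D ^ 2 * sincπ (η * D * ξ₂) ^ 2) := by
        gcongr; exact sq_norm_gkernel_le D η ξ₁ ξ₂
    _ = 64 * ((π * (η * D * ξ₂)) ^ 2 * sincπ (η * D * ξ₂) ^ 2) := by ring
    _ ≤ 64 := mul_le_of_le_one_right (by norm_num) (sq_mul_sq_sincπ_le_one _)

lemma intervalIntegrable_inv_sin_sq {a b : ℝ} (h : ∀ x ∈ Set.uIcc a b, Real.sin x ≠ 0) :
    IntervalIntegrable (fun x => (Real.sin x ^ 2)⁻¹) MeasureTheory.volume a b :=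
  ContinuousOn.intervalIntegrable <|
    (Real.continuous_sin.continuousOn.pow 2).inv₀ fun x hx => pow_ne_zero 2 (h x hx)

lemma integral_inv_sin_sq {a b : ℝ} (h : ∀ x ∈ Set.uIcc a b, Real.sin x ≠ 0) :
    ∫ x in a..b, (Real.sin x ^ 2)⁻¹ = Real.cot a - Real.cot b := by
  have hderiv : ∀ x ∈ Set.uIcc a b,
      HasDerivAt (fun y => -(Real.cos y / Real.sin y)) (Real.sin x ^ 2)⁻¹ x := by
    intro x hx
    refine ((Real.hasDerivAt_cos x).div (Real.hasDerivAt_sin x) (h x hx)).neg.congr_deriv ?_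
    field_simp [h x hx]
    linear_combination Real.sin_sq_add_cos_sq x
  rw [integral_eq_sub_of_hasDerivAt hderiv (intervalIntegrable_inv_sin_sq h),
    Real.cot_eq_cos_div_sin, Real.cot_eq_cos_div_sin]
  ring

lemma mul_sin_one_le_sin {x : ℝ} (h0 : 0 ≤ x) (h1 : x ≤ 1) : x * Real.sin 1 ≤ Real.sin x := by
  have h := strictConcaveOn_sin_Icc.concaveOn.2 (Set.left_mem_Icc.2 pi_pos.le)
    ⟨zero_le_one, by linarith [pi_gt_three]⟩ (by linarith : (0:ℝ) ≤ 1 - x) h0 (by ring)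
  simpa using h

lemma cot_inv_le {r : ℝ} (hr : 1 < r) : Real.cot r⁻¹ ≤ r / Real.sin 1 := by
  have hr0 : 0 < r := by linarith
  have hsin1 : 0 < Real.sin 1 := sin_pos_of_pos_of_lt_pi one_pos (by linarith [pi_gt_three])
  have hsin : r⁻¹ * Real.sin 1 ≤ Real.sin r⁻¹ :=
    mul_sin_one_le_sin (by positivity) (inv_le_one_of_one_le₀ hr.le)
  have hsin0 : 0 < Real.sin r⁻¹ := lt_of_lt_of_le (by positivity) hsin
  rw [Real.cot_eq_cos_div_sin, div_le_div_iff₀ hsin0 hsin1]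
  calc Real.cos r⁻¹ * Real.sin 1 ≤ 1 * Real.sin 1 := by gcongr; exact cos_le_one _
    _ = r * (r⁻¹ * Real.sin 1) := by field_simp
    _ ≤ r * Real.sin r⁻¹ := by gcongr

section CircleIntegral

variable {f : ℝ → ℝ} {A B r : ℝ}

lemma integral_zero_pi_le (hf : Continuous f) (hr : 1 < r) (hB0 : 0 ≤ B)
    (hA : ∀ θ, f θ ≤ A * r) (hB : ∀ θ, f θ * (r * Real.sin θ ^ 2) ≤ B) :
    ∫ θ in (0 : ℝ)..π, f θ ≤ 2 * (A + B / Real.sin 1) := by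
  set s := r⁻¹ with hs
  have hr0 : 0 < r := by linarith
  have hs0 : 0 < s := by positivity
  have hs1 : s < 1 := inv_lt_one_of_one_lt₀ hr
  have hsπ : s ≤ π - s := by linarith [pi_gt_three]
  have hI : ∀ a b, IntervalIntegrable f MeasureTheory.volume a b := hf.intervalIntegrable
  have short : ∀ a, ∫ θ in a..a + s, f θ ≤ A := fun a =>
    calc ∫ θ in a..a + s, f θ ≤ ∫ _ in a..a + s, A * r :=
          integral_mono_on (by linarith) (hI _ _) intervalIntegrable_const fun θ _ => hA θ
      _ = A := by rw [integral_const, smul_eq_mul, add_sub_cancel_left, hs]; field_simp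
  have hsin : ∀ θ ∈ Set.uIcc s (π - s), 0 < Real.sin θ := by
    intro θ hθ
    rw [Set.uIcc_of_le hsπ] at hθ
    exact sin_pos_of_pos_of_lt_pi (by linarith [hθ.1]) (by linarith [hθ.2])
  have long : ∫ θ in s..π - s, f θ ≤ 2 * (B / Real.sin 1) :=
    calc ∫ θ in s..π - s, f θ ≤ ∫ θ in s..π - s, B / r * (Real.sin θ ^ 2)⁻¹ := by
          refine integral_mono_on hsπ (hI _ _)
            ((intervalIntegrable_inv_sin_sq fun θ hθ => (hsin θ hθ).ne').const_mul _) ?_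
          intro θ hθ
          have hpos : 0 < r * Real.sin θ ^ 2 :=
            mul_pos hr0 (pow_pos (hsin θ (Set.uIcc_of_le hsπ ▸ hθ)) 2)
          exact ((le_div_iff₀ hpos).2 (hB θ)).trans_eq (by ring)
      _ = B / r * (Real.cot s - Real.cot (π - s)) := by
          rw [integral_const_mul, integral_inv_sin_sq fun θ hθ => (hsin θ hθ).ne']
      _ = 2 * (B / r * Real.cot s) := by
          rw [Real.cot_eq_cos_div_sin, Real.cot_eq_cos_div_sin, Real.cos_pi_sub,
            Real.sin_pi_sub]
          ring
      _ ≤ 2 * (B / r * (r / Real.sin 1)) := by gcongr; exact cot_inv_le hr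
      _ = 2 * (B / Real.sin 1) := by field_simp
  calc ∫ θ in (0 : ℝ)..π, f θ
      = (∫ θ in (0 : ℝ)..s, f θ) + (∫ θ in s..π - s, f θ) + ∫ θ in π - s..π, f θ := by
        rw [integral_add_adjacent_intervals (hI _ _) (hI _ _),
          integral_add_adjacent_intervals (hI _ _) (hI _ _)]
    _ ≤ A + 2 * (B / Real.sin 1) + A := by
        gcongr
        · simpa using short 0
        · simpa using short (π - s)
    _ = 2 * (A + B / Real.sin 1) := by ring

lemma integral_zero_two_pi_le (hf : Continuous f) (hr : 1 < r) (hB0 : 0 ≤ B)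
    (hA : ∀ θ, f θ ≤ A * r) (hB : ∀ θ, f θ * (r * Real.sin θ ^ 2) ≤ B) :
    ∫ θ in (0 : ℝ)..2 * π, f θ ≤ 4 * (A + B / Real.sin 1) := by
  have hshift : ∫ θ in π..2 * π, f θ = ∫ θ in (0 : ℝ)..π, f (θ + π) := by
    rw [integral_comp_add_right, zero_add, two_mul]
  have hfirst := integral_zero_pi_le hf hr hB0 hA hB
  have hsecond := integral_zero_pi_le (f := fun θ => f (θ + π)) (by fun_prop) hr hB0
    (fun θ => hA _) (fun θ => by simpa [Real.sin_add_pi] using hB (θ + π))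
  rw [← integral_add_adjacent_intervals (hf.intervalIntegrable 0 π)
    (hf.intervalIntegrable π (2 * π)), hshift]
  linarith

end CircleIntegral

theorem gkernel_circle_integral_bound_general (D H h : ℝ)
    (hhH : h < H) (r : ℝ) (hr : 1 < r) :
    (∫ θ in (0 : ℝ)..(2 * π),
        r * (‖gkernel D (1 - h / H) (r * Real.cos θ) (r * Real.sin θ)‖) ^ 2) ≤
      256 * (D ^ 2 + 1 / (π ^ 2 * (1 - h / H) ^ 2 * Real.sin 1)) := by
  set η := 1 - h / H
  have hη : η ≠ 0 := by
    rcases eq_or_ne H 0 with rfl | hH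
    · simp [η]
    · rw [Ne, sub_eq_zero, eq_comm, div_eq_one_iff_eq hH]
      exact hhH.ne
  have hr0 : 0 < r := by linarith
  refine (integral_zero_two_pi_le (A := 64 * D ^ 2) (B := 64 / (π * η) ^ 2) ?_ hr
    (by positivity) (fun θ => ?_) (fun θ => ?_)).trans_eq ?_
  · unfold gkernel
    fun_prop
  · rw [mul_comm _ r]
    exact mul_le_mul_of_nonneg_left (sq_norm_gkernel_le_const ..) hr0.le
  · rw [le_div_iff₀ (by positivity)]
    set g := gkernel D η (r * Real.cos θ) (r * Real.sin θ)
    calc r * ‖g‖ ^ 2 * (r * Real.sin θ ^ 2) * (π * η) ^ 2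
        = (π * η * (r * Real.sin θ)) ^ 2 * ‖g‖ ^ 2 := by ring
      _ ≤ 64 := sq_mul_sq_norm_gkernel_le ..
  · field_simp
    ring

/-- The arc-length integral of `|g_h^x|²` over the circle of radius `r` is bounded
by a constant independent of `r`. -/
theorem gkernel_circle_integral_bound (D H h : ℝ) (hD : 0 < D) (hH : 0 < H)
    (hh : 0 ≤ h) (hhH : h < H) (r : ℝ) (hr : 1 < r) :
    (∫ θ in (0 : ℝ)..(2 * π),
        r * (‖gkernel D (1 - h / H) (r * Real.cos θ) (r * Real.sin θ)‖) ^ 2) ≤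
      256 * (D ^ 2 + 1 / (π ^ 2 * (1 - h / H) ^ 2 * Real.sin 1)) :=
  gkernel_circle_integral_bound_general D H h hhH r hr
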